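/- Monotonicity of equilibrium costs in demand (scalar consequence): under the hypotheses of the demand-sensitivity proposition, for any OD pair θ and any path s_{θ,i} used in both equilibria (y_{θ,i} > 0 and y'_{θ,i} > 0), if only the demand of OD pair θ changes (d'_{θ'} = d_{θ'} for all θ' ≠ θ), then [Σ_{e ∈ s_{θ,i}} (c_e(x'_e) − c_e(x_e))] · (d'_θ − d_θ) ≥ 0. -/

import Mathlib

/-!
Monotonicity of the edge costs makes `∑ₑ (λ'ₑ - λₑ) (x'ₑ - xₑ)` nonnegative. Writing `x = A y` for
the edge–path incidence matrix `A` moves this sum onto paths, where the KKT conditions split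
`(λ' - λ) A` into the OD potentials `ν' - ν` and the multipliers `μ' - μ`. Summing the potentials
over the paths of each OD pair produces `∑_θ (ν'_θ - ν_θ) (d'_θ - d_θ)`, while complementary
slackness makes the `μ`-part nonpositive. If only the demand of `θ₀` changes, a single term of
that sum remains, and `ν_θ₀` is the cost of any path of `θ₀` used in equilibrium.
-/

open Finset Matrix

theorem sum_sub_mul_sub_nonneg_of_monotone {ι : Type*} [Fintype ι] {c : ι → ℝ → ℝ}
    (hc : ∀ i, Monotone (c i)) (x x' : ι → ℝ) :
    0 ≤ ∑ i, (c i (x' i) - c i (x i)) * (x' i - x i) :=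
  sum_nonneg fun i _ => ((hc i).monovary monotone_id).sub_mul_sub_nonneg (x i) (x' i)

theorem sum_sub_mul_sub_nonpos_of_complementary {ι : Type*} [Fintype ι] {μ μ' y y' : ι → ℝ}
    (hμ : ∀ i, 0 ≤ μ i) (hμ' : ∀ i, 0 ≤ μ' i) (hy : ∀ i, 0 ≤ y i) (hy' : ∀ i, 0 ≤ y' i)
    (hμy : ∀ i, μ i * y i = 0) (hμy' : ∀ i, μ' i * y' i = 0) :
    ∑ i, (μ' i - μ i) * (y' i - y i) ≤ 0 :=
  sum_nonpos fun i _ => by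
    have hcross : (μ' i - μ i) * (y' i - y i)
        = μ' i * y' i + μ i * y i - μ' i * y i - μ i * y' i := by ring
    linarith [mul_nonneg (hμ' i) (hy i), mul_nonneg (hμ i) (hy' i), hμy i, hμy' i]

theorem sum_comp_mul_eq_sum_mul_sum_ite {ι κ R : Type*} [Fintype ι] [Fintype κ] [DecidableEq κ]
    [NonUnitalNonAssocSemiring R] (f : ι → κ) (g : κ → R) (z : ι → R) :
    ∑ i, g (f i) * z i = ∑ k, g k * ∑ i, if f i = k then z i else 0 := by
  simp_rw [mul_sum, mul_ite, mul_zero]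
  rw [sum_comm]
  simp [sum_ite_eq]

theorem wardrop_demand_sensitivity {Θ E P : Type*} [Fintype Θ] [DecidableEq Θ]
    [Fintype E] [Fintype P] {od : P → Θ} {a : Matrix E P ℝ} {c : E → ℝ → ℝ}
    (hc : ∀ e, Monotone (c e)) {d d' : Θ → ℝ} {y y' : P → ℝ} (hy : ∀ p, 0 ≤ y p)
    (hy' : ∀ p, 0 ≤ y' p) (hd : ∀ θ, ∑ p, (if od p = θ then y p else 0) = d θ)
    (hd' : ∀ θ, ∑ p, (if od p = θ then y' p else 0) = d' θ) {x x' : E → ℝ}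
    (hx : ∀ e, x e = ∑ p, a e p * y p) (hx' : ∀ e, x' e = ∑ p, a e p * y' p)
    {ν ν' : Θ → ℝ} {lam lam' : E → ℝ} {μ μ' : P → ℝ} (hμ : ∀ p, 0 ≤ μ p) (hμ' : ∀ p, 0 ≤ μ' p)
    (hlam : ∀ e, c e (x e) = lam e) (hlam' : ∀ e, c e (x' e) = lam' e)
    (hν : ∀ p, ν (od p) = (∑ e, lam e * a e p) - μ p)
    (hν' : ∀ p, ν' (od p) = (∑ e, lam' e * a e p) - μ' p)
    (hμy : ∀ p, μ p * y p = 0) (hμy' : ∀ p, μ' p * y' p = 0) :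
    0 ≤ ∑ θ, (ν' θ - ν θ) * (d' θ - d θ) := by
  have hedges : 0 ≤ (lam' - lam) ⬝ᵥ (x' - x) := by
    simpa only [dotProduct, Pi.sub_apply, hlam, hlam'] using
      sum_sub_mul_sub_nonneg_of_monotone hc x x'
  have hflow : x' - x = a *ᵥ (y' - y) := by
    rw [mulVec_sub]
    ext e
    simp only [Pi.sub_apply, hx, hx', mulVec, dotProduct]
  have hpaths : (lam' - lam) ᵥ* a = (fun p => ν' (od p) - ν (od p)) + (μ' - μ) := by
    rw [sub_vecMul]
    ext p
    simp only [Pi.sub_apply, Pi.add_apply, vecMul, dotProduct, hν, hν']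
    ring
  have hdemand :
      (fun p => ν' (od p) - ν (od p)) ⬝ᵥ (y' - y) = ∑ θ, (ν' θ - ν θ) * (d' θ - d θ) := by
    change ∑ p, (ν' - ν) (od p) * (y' - y) p = _
    rw [sum_comp_mul_eq_sum_mul_sum_ite]
    refine sum_congr rfl fun θ _ => congrArg _ ?_
    rw [← hd, ← hd', ← sum_sub_distrib]
    exact sum_congr rfl fun p _ => by split_ifs <;> simp
  have hslack : (μ' - μ) ⬝ᵥ (y' - y) ≤ 0 :=
    sum_sub_mul_sub_nonpos_of_complementary hμ hμ' hy hy' hμy hμy'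
  rw [hflow, dotProduct_mulVec, hpaths, add_dotProduct, hdemand] at hedges
  linarith

theorem wardrop_demand_sensitivity_scalar_general
    {Θ E P : Type*} [Fintype Θ] [DecidableEq Θ] [Fintype E] [Fintype P]
    (od : P → Θ) (a : E → P → ℝ)
    (c : E → ℝ → ℝ)
    (hc_mono : ∀ e, Monotone (c e))
    (d d' : Θ → ℝ)
    (y y' : P → ℝ)
    (hy : ∀ p, 0 ≤ y p) (hy' : ∀ p, 0 ≤ y' p)
    (hfeas : ∀ θ, ∑ p, (if od p = θ then y p else 0) = d θ)
    (hfeas' : ∀ θ, ∑ p, (if od p = θ then y' p else 0) = d' θ)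
    (x x' : E → ℝ)
    (hx : ∀ e, x e = ∑ p, a e p * y p)
    (hx' : ∀ e, x' e = ∑ p, a e p * y' p)
    (ν ν' : Θ → ℝ) (lam lam' : E → ℝ) (μ μ' : P → ℝ)
    (hμ : ∀ p, 0 ≤ μ p) (hμ' : ∀ p, 0 ≤ μ' p)
    (hKKT1 : ∀ e, c e (x e) = lam e)
    (hKKT1' : ∀ e, c e (x' e) = lam' e)
    (hKKT2 : ∀ p, ν (od p) = (∑ e, lam e * a e p) - μ p)
    (hKKT2' : ∀ p, ν' (od p) = (∑ e, lam' e * a e p) - μ' p)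
    (hKKT3 : ∀ p, μ p * y p = 0)
    (hKKT3' : ∀ p, μ' p * y' p = 0)
    (θ₀ : Θ) (p₀ : P) (hod : od p₀ = θ₀)
    (hused : 0 < y p₀) (hused' : 0 < y' p₀)
    (honly : ∀ θ, θ ≠ θ₀ → d' θ = d θ) :
    (∑ e, a e p₀ * (c e (x' e) - c e (x e))) * (d' θ₀ - d θ₀) ≥ 0 := by
  have hμ₀ : μ p₀ = 0 := (mul_eq_zero.mp (hKKT3 p₀)).resolve_right hused.ne'
  have hμ₀' : μ' p₀ = 0 := (mul_eq_zero.mp (hKKT3' p₀)).resolve_right hused'.ne'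
  have hpath : ∑ e, a e p₀ * (c e (x' e) - c e (x e)) = ν' θ₀ - ν θ₀ := by
    rw [← hod, hKKT2, hKKT2', hμ₀, hμ₀', sub_zero, sub_zero, ← sum_sub_distrib]
    exact sum_congr rfl fun e _ => by rw [hKKT1, hKKT1']; ring
  have hsens := wardrop_demand_sensitivity hc_mono hy hy' hfeas hfeas' hx hx' hμ hμ'
    hKKT1 hKKT1' hKKT2 hKKT2' hKKT3 hKKT3'
  rw [sum_eq_single θ₀ (fun θ _ hθ => by rw [honly θ hθ, sub_self, mul_zero])
    (fun h => (h (mem_univ θ₀)).elim)] at hsens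
  rw [hpath]
  exact hsens

/-- Scalar consequence of demand sensitivity: for a path used in both equilibria,
if only the demand of OD pair `θ₀` changes, then
`[Σ_{e ∈ s} (c_e(x'_e) − c_e(x_e))] · (d'_{θ₀} − d_{θ₀}) ≥ 0`. -/
theorem wardrop_demand_sensitivity_scalar
    {Θ E P : Type*} [Fintype Θ] [DecidableEq Θ] [Fintype E] [Fintype P]
    (od : P → Θ) (a : E → P → ℝ)
    (ha : ∀ e p, a e p = 0 ∨ a e p = 1)
    (c : E → ℝ → ℝ)
    (hc_cont : ∀ e, Continuous (c e))
    (hc_mono : ∀ e, Monotone (c e))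
    (d d' : Θ → ℝ)
    (y y' : P → ℝ)
    (hy : ∀ p, 0 ≤ y p) (hy' : ∀ p, 0 ≤ y' p)
    (hfeas : ∀ θ, ∑ p, (if od p = θ then y p else 0) = d θ)
    (hfeas' : ∀ θ, ∑ p, (if od p = θ then y' p else 0) = d' θ)
    (x x' : E → ℝ)
    (hx : ∀ e, x e = ∑ p, a e p * y p)
    (hx' : ∀ e, x' e = ∑ p, a e p * y' p)
    (ν ν' : Θ → ℝ) (lam lam' : E → ℝ) (μ μ' : P → ℝ)
    (hμ : ∀ p, 0 ≤ μ p) (hμ' : ∀ p, 0 ≤ μ' p)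
    (hKKT1 : ∀ e, c e (x e) = lam e)
    (hKKT1' : ∀ e, c e (x' e) = lam' e)
    (hKKT2 : ∀ p, ν (od p) = (∑ e, lam e * a e p) - μ p)
    (hKKT2' : ∀ p, ν' (od p) = (∑ e, lam' e * a e p) - μ' p)
    (hKKT3 : ∀ p, μ p * y p = 0)
    (hKKT3' : ∀ p, μ' p * y' p = 0)
    (θ₀ : Θ) (p₀ : P) (hod : od p₀ = θ₀)
    (hused : 0 < y p₀) (hused' : 0 < y' p₀)
    (honly : ∀ θ, θ ≠ θ₀ → d' θ = d θ) :
    (∑ e, a e p₀ * (c e (x' e) - c e (x e))) * (d' θ₀ - d θ₀) ≥ 0 :=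
  wardrop_demand_sensitivity_scalar_general od a c hc_mono d d' y y' hy hy' hfeas hfeas' x x' hx hx'
    ν ν' lam lam' μ μ' hμ hμ' hKKT1 hKKT1' hKKT2 hKKT2' hKKT3 hKKT3' θ₀ p₀ hod hused hused' honly
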